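/- arXiv:2104.05350 — 6 statements merged into one kernel-verified Lean document; each statement's English description precedes it below -/
import Mathlib

section
/- Let I and J be finite index sets, T : J × I → ℝ a left stochastic matrix (all entries nonnegative, each column sums to 1), p : I → (0,1] a probability distribution with all p_i > 0, p⁰ : I → (0,1) a probability distribution with all entries positive, and p̃ : J → [0,1] a probability distribution. Define q⁰_j := ∑_i T_{ji} p⁰_i, and assume q⁰_j > 0 for all j. Then the 'general J-equation' holds: ∑_{i,j} T_{ji} p_i · (p⁰_i · p̃_j) / (q⁰_j · p_i) = 1. -/
open Finset

theorem sum_sum_mul_div_sum_eq_sum {𝕜 ι κ : Type*} [Field 𝕜] [Fintype ι] [Fintype κ]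
    (w : κ → ι → 𝕜) (a : κ → 𝕜) (hw : ∀ j, ∑ i, w j i ≠ 0) :
    ∑ i, ∑ j, w j i * (a j / ∑ i', w j i') = ∑ j, a j := by
  rw [sum_comm]
  refine sum_congr rfl fun j _ => ?_
  rw [← sum_mul, mul_div_cancel₀ _ (hw j)]

theorem general_J_equation_general {I J : Type*} [Fintype I] [Fintype J]
    (T : J → I → ℝ) (p p0 : I → ℝ) (pt : J → ℝ)
    (hp : ∀ i, 0 < p i ∧ p i ≤ 1)
    (hptsum : ∑ j, pt j = 1)
    (q0 : J → ℝ) (hq0def : ∀ j, q0 j = ∑ i, T j i * p0 i)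
    (hq0pos : ∀ j, 0 < q0 j) :
    ∑ i, ∑ j, T j i * p i * (p0 i * pt j) / (q0 j * p i) = 1 := by
  have cancel_p : ∀ i j, T j i * p i * (p0 i * pt j) / (q0 j * p i)
      = T j i * p0 i * (pt j / ∑ i', T j i' * p0 i') := by
    intro i j
    have hpi := (hp i).1.ne'
    have hqj := (hq0pos j).ne'
    rw [← hq0def j]
    field_simp
  simp_rw [cancel_p]
  rw [sum_sum_mul_div_sum_eq_sum _ _ fun j => hq0def j ▸ (hq0pos j).ne', hptsum]

/-- General J-equation. -/
theorem general_J_equation {I J : Type*} [Fintype I] [Fintype J]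
    (T : J → I → ℝ) (p p0 : I → ℝ) (pt : J → ℝ)
    (hT0 : ∀ j i, 0 ≤ T j i) (hT1 : ∀ i, ∑ j, T j i = 1)
    (hp : ∀ i, 0 < p i ∧ p i ≤ 1) (hpsum : ∑ i, p i = 1)
    (hp0 : ∀ i, 0 < p0 i ∧ p0 i < 1) (hp0sum : ∑ i, p0 i = 1)
    (hpt : ∀ j, 0 ≤ pt j ∧ pt j ≤ 1) (hptsum : ∑ j, pt j = 1)
    (q0 : J → ℝ) (hq0def : ∀ j, q0 j = ∑ i, T j i * p0 i)
    (hq0pos : ∀ j, 0 < q0 j) :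
    ∑ i, ∑ j, T j i * p i * (p0 i * pt j) / (q0 j * p i) = 1 :=
  general_J_equation_general T p p0 pt hp hptsum q0 hq0def hq0pos
end

section
/- Let N be a finite index set, E : N → ℝ energies, d : N → ℕ positive degeneracies, β₀ ∈ ℝ, and let p⁰_n = d_n e^{-β₀ E_n} / Z₀ with Z₀ = ∑_n d_n e^{-β₀ E_n} be the Gibbs distribution at inverse temperature β₀. Let T be a left stochastic N × N matrix satisfying T p⁰ = p⁰ (a 'Gibbs matrix'). For any β ∈ ℝ, let p be the Gibbs distribution at inverse temperature β. Then the Jarzynski-type equation ∑_{m,n} T_{mn} p_n · e^{-(β - β₀)(E_m - E_n)} = 1 holds. -/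
/-!
Writing `p₀`, `p` for the Gibbs distributions at `β₀`, `β`, the ratio `p m / p₀ m` is proportional
to `exp (-(β - β₀) E m)`, so `p n * exp (-(β - β₀) (E m - E n)) = p₀ n * (p m / p₀ m)`. Summing over
`n` against `T` and using `T p₀ = p₀` leaves `∑ m, p₀ m * (p m / p₀ m) = ∑ m, p m = 1`.
-/

open Finset Real

section Gibbs

variable {N : Type*} [Fintype N]

noncomputable def partitionFn (g E : N → ℝ) (β : ℝ) : ℝ :=
  ∑ k, g k * exp (-β * E k)

noncomputable def gibbs (g E : N → ℝ) (β : ℝ) (n : N) : ℝ :=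
  g n * exp (-β * E n) / partitionFn g E β

variable {g : N → ℝ} (E : N → ℝ) (β : ℝ)

theorem partitionFn_pos [Nonempty N] (hg : ∀ n, 0 < g n) : 0 < partitionFn g E β :=
  sum_pos (fun k _ => mul_pos (hg k) (exp_pos _)) univ_nonempty

theorem gibbs_pos [Nonempty N] (hg : ∀ n, 0 < g n) (n : N) : 0 < gibbs g E β n :=
  div_pos (mul_pos (hg n) (exp_pos _)) (partitionFn_pos E β hg)

theorem sum_gibbs [Nonempty N] (hg : ∀ n, 0 < g n) : ∑ n, gibbs g E β n = 1 := by
  simp only [gibbs, ← sum_div]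
  exact div_self (partitionFn_pos E β hg).ne'

theorem gibbs_div_gibbs [Nonempty N] (hg : ∀ n, 0 < g n) (β₀ : ℝ) (n : N) :
    gibbs g E β n / gibbs g E β₀ n =
      partitionFn g E β₀ / partitionFn g E β * exp (-(β - β₀) * E n) := by
  have hZ := (partitionFn_pos E β hg).ne'
  have hZ₀ := (partitionFn_pos E β₀ hg).ne'
  have hexp : exp (-β * E n) = exp (-(β - β₀) * E n) * exp (-β₀ * E n) := by
    rw [← exp_add]; ring_nf
  rw [gibbs, gibbs, hexp]
  field_simp [(hg n).ne', (exp_pos (-β₀ * E n)).ne']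

theorem gibbs_mul_exp_eq [Nonempty N] (hg : ∀ n, 0 < g n) (β₀ : ℝ) (m n : N) :
    gibbs g E β n * exp (-(β - β₀) * (E m - E n)) =
      gibbs g E β₀ n * (gibbs g E β m / gibbs g E β₀ m) := by
  have hexp : exp (-(β - β₀) * (E m - E n)) * exp (-(β - β₀) * E n) = exp (-(β - β₀) * E m) := by
    rw [← exp_add]; ring_nf
  rw [gibbs_div_gibbs E β hg, ← hexp, ← mul_div_cancel₀ (gibbs g E β n) (gibbs_pos E β₀ hg n).ne',
    gibbs_div_gibbs E β hg]
  ring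

end Gibbs

theorem sum_sum_mul_eq_of_fixed {N : Type*} [Fintype N] (T : N → N → ℝ) (q r : N → ℝ)
    (hfix : ∀ m, ∑ n, T m n * q n = q m) : ∑ m, ∑ n, T m n * q n * r m = ∑ m, q m * r m := by
  simp_rw [← sum_mul, hfix]

theorem jarzynski_type_equation_general {N : Type*} [Fintype N] [Nonempty N]
    (E : N → ℝ) (d : N → ℕ) (hd : ∀ n, 0 < d n) (β₀ β : ℝ)
    (T : N → N → ℝ)
    (p0 p : N → ℝ)
    (hp0 : ∀ n, p0 n = (d n : ℝ) * Real.exp (-β₀ * E n) /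
      (∑ k, (d k : ℝ) * Real.exp (-β₀ * E k)))
    (hp : ∀ n, p n = (d n : ℝ) * Real.exp (-β * E n) /
      (∑ k, (d k : ℝ) * Real.exp (-β * E k)))
    (hfix : ∀ m, ∑ n, T m n * p0 n = p0 m) :
    ∑ m, ∑ n, T m n * p n * Real.exp (-(β - β₀) * (E m - E n)) = 1 := by
  set g : N → ℝ := fun n => (d n : ℝ)
  have hg : ∀ n, 0 < g n := fun n => Nat.cast_pos.mpr (hd n)
  obtain rfl : p0 = gibbs g E β₀ := funext hp0
  obtain rfl : p = gibbs g E β := funext hp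
  calc ∑ m, ∑ n, T m n * gibbs g E β n * exp (-(β - β₀) * (E m - E n))
      = ∑ m, ∑ n, T m n * gibbs g E β₀ n * (gibbs g E β m / gibbs g E β₀ m) := by
        simp_rw [mul_assoc, gibbs_mul_exp_eq E β hg]
    _ = ∑ m, gibbs g E β₀ m * (gibbs g E β m / gibbs g E β₀ m) :=
        sum_sum_mul_eq_of_fixed T _ _ hfix
    _ = 1 := by
        simp_rw [mul_div_cancel₀ _ (gibbs_pos E β₀ hg _).ne']
        exact sum_gibbs E β hg

/-- Jarzynski-type equation for a Gibbs matrix. -/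
theorem jarzynski_type_equation {N : Type*} [Fintype N] [Nonempty N]
    (E : N → ℝ) (d : N → ℕ) (hd : ∀ n, 0 < d n) (β₀ β : ℝ)
    (T : N → N → ℝ) (hT0 : ∀ m n, 0 ≤ T m n) (hT1 : ∀ n, ∑ m, T m n = 1)
    (p0 p : N → ℝ)
    (hp0 : ∀ n, p0 n = (d n : ℝ) * Real.exp (-β₀ * E n) /
      (∑ k, (d k : ℝ) * Real.exp (-β₀ * E k)))
    (hp : ∀ n, p n = (d n : ℝ) * Real.exp (-β * E n) /
      (∑ k, (d k : ℝ) * Real.exp (-β * E k)))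
    (hfix : ∀ m, ∑ n, T m n * p0 n = p0 m) :
    ∑ m, ∑ n, T m n * p n * Real.exp (-(β - β₀) * (E m - E n)) = 1 :=
  jarzynski_type_equation_general E d hd β₀ β T p0 p hp0 hp hfix
end

section
/- Let N be a finite set, E : N → ℝ, d : N → ℕ positive, β₀ ∈ ℝ, p⁰ the Gibbs distribution at inverse temperature β₀, and T a left stochastic matrix with T p⁰ = p⁰. Let p be any probability distribution with positive entries and q := T p. Then the second Clausius inequality holds: β₀ ⟨ΔQ⟩ ≤ ΔS, where ⟨ΔQ⟩ = ∑_n q_n E_n − ∑_n p_n E_n and ΔS = S(q) − S(p) with S(r) = −∑_n r_n log(r_n/d_n). -/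
open Finset Real

/-!
Against the Gibbs state `p⁰ = d e^{-β₀ E} / Z` one has
`∑ r log (r / d) = D(r ‖ p⁰) - β₀ ∑ r E - (∑ r) log Z`, and `T` preserves total mass, so the
inequality is the monotonicity `D(T p ‖ p⁰) ≤ D(p ‖ p⁰)` of relative entropy under a stochastic
map fixing `p⁰`. Row by row this is Jensen's inequality for `x ↦ x log x` at the ratios
`p n / p⁰ n` with the weights `T m n p⁰ n / p⁰ m`, which sum to one because `T p⁰ = p⁰`.
-/

section

variable {ι : Type*} [Fintype ι]

noncomputable def relEntropy (p ρ : ι → ℝ) : ℝ :=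
  ∑ i, p i * log (p i / ρ i)

theorem mul_log_div_le_sum_mul_mul_log_div (a ρ p : ι → ℝ) (ha : ∀ i, 0 ≤ a i)
    (hρ : ∀ i, 0 < ρ i) (hp : ∀ i, 0 ≤ p i) {c : ℝ} (hc : 0 < c) (haρ : ∑ i, a i * ρ i = c) :
    (∑ i, a i * p i) * log ((∑ i, a i * p i) / c) ≤ ∑ i, a i * (p i * log (p i / ρ i)) := by
  have jensen := convexOn_mul_log.map_sum_le (t := univ) (w := fun i ↦ a i * ρ i / c)
    (p := fun i ↦ p i / ρ i)
    (fun i _ ↦ div_nonneg (mul_nonneg (ha i) (hρ i).le) hc.le)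
    (by rw [← sum_div, haρ, div_self hc.ne'])
    (fun i _ ↦ Set.mem_Ici.mpr (div_nonneg (hp i) (hρ i).le))
  have hmean : ∑ i, (a i * ρ i / c) • (p i / ρ i) = (∑ i, a i * p i) / c := by
    rw [sum_div]
    refine sum_congr rfl fun i _ ↦ ?_
    rw [smul_eq_mul]
    field_simp [(hρ i).ne']
  have hterm : ∀ i, c * ((a i * ρ i / c) • (p i / ρ i * log (p i / ρ i))) =
      a i * (p i * log (p i / ρ i)) := fun i ↦ by
    rw [smul_eq_mul]
    field_simp [(hρ i).ne']
  rw [hmean] at jensen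
  calc (∑ i, a i * p i) * log ((∑ i, a i * p i) / c)
      = c * ((∑ i, a i * p i) / c * log ((∑ i, a i * p i) / c)) := by field_simp
    _ ≤ c * ∑ i, (a i * ρ i / c) • (p i / ρ i * log (p i / ρ i)) :=
        mul_le_mul_of_nonneg_left jensen hc.le
    _ = ∑ i, a i * (p i * log (p i / ρ i)) := by simp only [mul_sum, hterm]

section Stochastic

variable (T : ι → ι → ℝ) (hT1 : ∀ n, ∑ m, T m n = 1)
include hT1

theorem sum_sum_stochastic_mul (p : ι → ℝ) : ∑ m, ∑ n, T m n * p n = ∑ n, p n := by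
  rw [sum_comm]
  simp only [← sum_mul, hT1, one_mul]

theorem relEntropy_stochastic_le (hT0 : ∀ m n, 0 ≤ T m n) (ρ : ι → ℝ) (hρ : ∀ i, 0 < ρ i)
    (hfix : ∀ m, ∑ n, T m n * ρ n = ρ m) (p : ι → ℝ) (hp : ∀ i, 0 ≤ p i) :
    relEntropy (fun m ↦ ∑ n, T m n * p n) ρ ≤ relEntropy p ρ :=
  calc relEntropy (fun m ↦ ∑ n, T m n * p n) ρ
      ≤ ∑ m, ∑ n, T m n * (p n * log (p n / ρ n)) := sum_le_sum fun m _ ↦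
        mul_log_div_le_sum_mul_mul_log_div (T m) ρ p (hT0 m) hρ hp (hρ m) (hfix m)
    _ = relEntropy p ρ := sum_sum_stochastic_mul T hT1 _

end Stochastic

section Gibbs

variable (g E : ι → ℝ) (hg : ∀ i, 0 < g i) (β : ℝ)
include hg

theorem partition_function_pos (i : ι) : 0 < ∑ k, g k * exp (-β * E k) :=
  sum_pos' (fun k _ ↦ (mul_pos (hg k) (exp_pos _)).le)
    ⟨i, mem_univ i, mul_pos (hg i) (exp_pos _)⟩

variable (ρ : ι → ℝ) (hρ : ∀ i, ρ i = g i * exp (-β * E i) / ∑ k, g k * exp (-β * E k))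
include hρ

theorem gibbs_pos_s5 (i : ι) : 0 < ρ i := by
  rw [hρ i]
  exact div_pos (mul_pos (hg i) (exp_pos _)) (partition_function_pos g E hg β i)

theorem log_gibbs_div (i : ι) :
    log (ρ i / g i) = -β * E i - log (∑ k, g k * exp (-β * E k)) := by
  have hratio : ρ i / g i = exp (-β * E i) / ∑ k, g k * exp (-β * E k) := by
    rw [hρ i]
    field_simp [(hg i).ne']
  rw [hratio, log_div (exp_pos _).ne' (partition_function_pos g E hg β i).ne', log_exp]

theorem sum_mul_log_div_eq_relEntropy_gibbs (r : ι → ℝ) :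
    ∑ i, r i * log (r i / g i) =
      relEntropy r ρ - β * ∑ i, r i * E i - (∑ i, r i) * log (∑ k, g k * exp (-β * E k)) := by
  have hterm : ∀ i, r i * log (r i / g i) =
      r i * log (r i / ρ i) - β * (r i * E i) - r i * log (∑ k, g k * exp (-β * E k)) := by
    intro i
    rcases eq_or_ne (r i) 0 with hr | hr
    · simp [hr]
    have hρi := gibbs_pos_s5 g E hg β ρ hρ i
    rw [← div_mul_div_cancel₀ (a := r i) (c := g i) hρi.ne', log_mul (div_ne_zero hr hρi.ne')
      (div_ne_zero hρi.ne' (hg i).ne'), log_gibbs_div g E hg β ρ hρ i]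
    ring
  simp only [relEntropy, hterm, sum_sub_distrib, mul_sum, sum_mul]

end Gibbs

end

theorem second_clausius_inequality_general {N : Type*} [Fintype N]
    (E : N → ℝ) (d : N → ℕ) (hd : ∀ n, 0 < d n) (β₀ : ℝ)
    (T : N → N → ℝ) (hT0 : ∀ m n, 0 ≤ T m n) (hT1 : ∀ n, ∑ m, T m n = 1)
    (p0 : N → ℝ)
    (hp0 : ∀ n, p0 n = (d n : ℝ) * Real.exp (-β₀ * E n) /
      (∑ k, (d k : ℝ) * Real.exp (-β₀ * E k)))
    (hfix : ∀ m, ∑ n, T m n * p0 n = p0 m)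
    (p q : N → ℝ) (hp : ∀ n, 0 < p n)
    (hq : ∀ m, q m = ∑ n, T m n * p n) :
    β₀ * ((∑ n, q n * E n) - (∑ n, p n * E n)) ≤
      (-(∑ n, q n * Real.log (q n / (d n : ℝ)))) -
      (-(∑ n, p n * Real.log (p n / (d n : ℝ)))) := by
  obtain rfl : q = fun m ↦ ∑ n, T m n * p n := funext hq
  have hd' : ∀ n, (0 : ℝ) < d n := fun n ↦ Nat.cast_pos.mpr (hd n)
  have hentropy := sum_mul_log_div_eq_relEntropy_gibbs (fun n ↦ (d n : ℝ)) E hd' β₀ p0 hp0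
  have hp0pos := gibbs_pos_s5 (fun n ↦ (d n : ℝ)) E hd' β₀ p0 hp0
  have hmono := relEntropy_stochastic_le T hT1 hT0 p0 hp0pos hfix p fun n ↦ (hp n).le
  rw [hentropy, hentropy, sum_sum_stochastic_mul T hT1]
  linarith

/-- Second Clausius inequality. -/
theorem second_clausius_inequality {N : Type*} [Fintype N] [Nonempty N]
    (E : N → ℝ) (d : N → ℕ) (hd : ∀ n, 0 < d n) (β₀ : ℝ)
    (T : N → N → ℝ) (hT0 : ∀ m n, 0 ≤ T m n) (hT1 : ∀ n, ∑ m, T m n = 1)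
    (p0 : N → ℝ)
    (hp0 : ∀ n, p0 n = (d n : ℝ) * Real.exp (-β₀ * E n) /
      (∑ k, (d k : ℝ) * Real.exp (-β₀ * E k)))
    (hfix : ∀ m, ∑ n, T m n * p0 n = p0 m)
    (p q : N → ℝ) (hp : ∀ n, 0 < p n) (hpsum : ∑ n, p n = 1)
    (hq : ∀ m, q m = ∑ n, T m n * p n) (hqpos : ∀ m, 0 < q m) :
    β₀ * ((∑ n, q n * E n) - (∑ n, p n * E n)) ≤
      (-(∑ n, q n * Real.log (q n / (d n : ℝ)))) -
      (-(∑ n, p n * Real.log (p n / (d n : ℝ)))) :=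
  second_clausius_inequality_general E d hd β₀ T hT0 hT1 p0 hp0 hfix p q hp hq
end

section
/- Let T be a left stochastic matrix on a finite set I, p a probability distribution on I with positive entries, p⁰ a probability distribution on I with positive entries, and define q := T p and q⁰ := T p⁰, assuming all entries of q and q⁰ are positive. Then the KL divergence is monotone under T: S(q‖q⁰) ≤ S(p‖p⁰), where S(a‖b) = ∑ a_i log(a_i/b_i). -/
/-!
Apply the log-sum inequality `(∑ aᵢ) log (∑ aᵢ / ∑ bᵢ) ≤ ∑ aᵢ log (aᵢ / bᵢ)` to each row `j`, with
`aᵢ = T j i * p i` and `bᵢ = T j i * p0 i`: its left side is the `j`-th term of `S(q‖q0)`, and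
in its right side the factor `T j i` cancels inside the logarithm. Summing over `j` and using
that the columns of `T` sum to one gives `S(p‖p0)`.
-/

open Finset Real

namespace Real

lemma mul_log_add_sub_mul_le_mul_log_div {a b c : ℝ} (ha : 0 ≤ a) (hb : 0 ≤ b)
    (hab : b = 0 → a = 0) (hc : 0 < c) :
    a * log c + a - b * c ≤ a * log (a / b) := by
  rcases ha.eq_or_lt with rfl | ha
  · simpa using mul_nonneg hb hc.le
  have hb : 0 < b := hb.lt_of_ne fun h => ha.ne' (hab h.symm)
  have hlog : 1 - (a / (b * c))⁻¹ ≤ log (a / (b * c)) :=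
    one_sub_inv_le_log_of_pos (by positivity)
  rw [log_div ha.ne' (by positivity), log_mul hb.ne' hc.ne', inv_div] at hlog
  rw [log_div ha.ne' hb.ne']
  have := mul_le_mul_of_nonneg_left hlog ha.le
  rw [mul_sub, mul_one, mul_div_cancel₀ _ ha.ne'] at this
  linarith

/-- The log-sum inequality. -/
theorem sum_mul_log_div_sum_le_sum_mul_log_div {ι : Type*} (s : Finset ι) (a b : ι → ℝ)
    (ha : ∀ i ∈ s, 0 ≤ a i) (hb : ∀ i ∈ s, 0 ≤ b i) (hab : ∀ i ∈ s, b i = 0 → a i = 0) :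
    (∑ i ∈ s, a i) * log ((∑ i ∈ s, a i) / ∑ i ∈ s, b i) ≤ ∑ i ∈ s, a i * log (a i / b i) := by
  set A := ∑ i ∈ s, a i
  set B := ∑ i ∈ s, b i
  rcases (sum_nonneg ha).eq_or_lt with hA | hA
  · have ha0 : ∀ i ∈ s, a i = 0 := (sum_eq_zero_iff_of_nonneg ha).1 hA.symm
    rw [show A = 0 from hA.symm, zero_mul]
    exact sum_nonneg fun i hi => by rw [ha0 i hi, zero_mul]
  have hB : 0 < B := by
    refine (sum_nonneg hb).lt_of_ne fun hB => hA.ne' ?_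
    exact sum_eq_zero fun i hi => hab i hi ((sum_eq_zero_iff_of_nonneg hb).1 hB.symm i hi)
  -- sum the tangent-line bound for `x log x` taken at the point `A / B`
  calc A * log (A / B) = ∑ i ∈ s, (a i * log (A / B) + a i - b i * (A / B)) := by
        rw [sum_sub_distrib, sum_add_distrib, ← sum_mul, ← sum_mul, mul_div_cancel₀ _ hB.ne']
        ring
    _ ≤ ∑ i ∈ s, a i * log (a i / b i) := sum_le_sum fun i hi =>
        mul_log_add_sub_mul_le_mul_log_div (ha i hi) (hb i hi) (hab i hi) (div_pos hA hB)

end Real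

theorem kl_divergence_monotone_general {I : Type*} [Fintype I]
    (T : I → I → ℝ) (hT0 : ∀ m n, 0 ≤ T m n) (hT1 : ∀ n, ∑ m, T m n = 1)
    (p p0 q q0 : I → ℝ)
    (hp : ∀ i, 0 < p i)
    (hp0 : ∀ i, 0 < p0 i)
    (hq : ∀ j, q j = ∑ i, T j i * p i)
    (hq0 : ∀ j, q0 j = ∑ i, T j i * p0 i) :
    ∑ j, q j * Real.log (q j / q0 j) ≤ ∑ i, p i * Real.log (p i / p0 i) := by
  have hcancel : ∀ j i, T j i * p i * log (T j i * p i / (T j i * p0 i))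
      = T j i * (p i * log (p i / p0 i)) := by
    intro j i
    rcases (hT0 j i).eq_or_lt with h | h
    · simp [← h]
    · rw [mul_div_mul_left _ _ h.ne', mul_assoc]
  calc ∑ j, q j * log (q j / q0 j)
      ≤ ∑ j, ∑ i, T j i * p i * log (T j i * p i / (T j i * p0 i)) := by
        gcongr with j
        rw [hq, hq0]
        refine sum_mul_log_div_sum_le_sum_mul_log_div _ _ _
          (fun i _ => mul_nonneg (hT0 j i) (hp i).le) (fun i _ => mul_nonneg (hT0 j i) (hp0 i).le)
          fun i _ h => ?_
        rw [(mul_eq_zero.1 h).resolve_right (hp0 i).ne', zero_mul]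
    _ = ∑ i, p i * log (p i / p0 i) := by
        simp_rw [hcancel]
        rw [sum_comm]
        simp_rw [← sum_mul, hT1, one_mul]

/-- Monotonicity of the Kullback–Leibler divergence under stochastic maps. -/
theorem kl_divergence_monotone {I : Type*} [Fintype I]
    (T : I → I → ℝ) (hT0 : ∀ m n, 0 ≤ T m n) (hT1 : ∀ n, ∑ m, T m n = 1)
    (p p0 q q0 : I → ℝ)
    (hp : ∀ i, 0 < p i) (hpsum : ∑ i, p i = 1)
    (hp0 : ∀ i, 0 < p0 i) (hp0sum : ∑ i, p0 i = 1)
    (hq : ∀ j, q j = ∑ i, T j i * p i) (hqpos : ∀ j, 0 < q j)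
    (hq0 : ∀ j, q0 j = ∑ i, T j i * p0 i) (hq0pos : ∀ j, 0 < q0 j) :
    ∑ j, q j * Real.log (q j / q0 j) ≤ ∑ i, p i * Real.log (p i / p0 i) :=
  kl_divergence_monotone_general T hT0 hT1 p p0 q q0 hp hp0 hq hq0
end

section
/- Let N be a finite set, E : N → ℝ, d : N → ℕ positive, and T a left stochastic matrix satisfying the modified bi-stochasticity condition ∑_n T_{mn} d_n = d_m for all m. Let p be the Gibbs distribution at inverse temperature β ≥ 0 and q = T p with positive entries. Then 0 ≤ ΔS ≤ β ⟨w⟩, where ΔS = S(q) − S(p) and ⟨w⟩ = E(q) − E(p). In particular the average work ⟨w⟩ is nonnegative and entropy does not decrease. -/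
/-!
Jensen's inequality for `x ↦ x log x`, applied in row `m` of `T` with the weights
`T m n * d n / d m` (they sum to one because `T d = d`), shows that `∑ r log (r / d)` does not
increase under `T`; this is `ΔS ≥ 0`. For the Gibbs state `log (p n / d n) = -β E n - log Z`,
hence `ΔS = β ⟨w⟩ - ∑ q log (q / p)` for every `q ≥ 0` of the same mass as `p`, and Gibbs'
inequality says that this relative entropy is nonnegative.
-/

open Finset Real

section

variable {ι : Type*} [Fintype ι]

theorem log_sum_inequality {w d p : ι → ℝ} (hw : ∀ n, 0 ≤ w n) (hd : ∀ n, 0 < d n)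
    (hp : ∀ n, 0 ≤ p n) (hD : 0 < ∑ n, w n * d n) :
    (∑ n, w n * p n) * log ((∑ n, w n * p n) / ∑ n, w n * d n) ≤
      ∑ n, w n * (p n * log (p n / d n)) := by
  set D := ∑ n, w n * d n
  have jensen := convexOn_mul_log.map_sum_le (t := univ) (w := fun n ↦ w n * d n / D)
    (p := fun n ↦ p n / d n) (fun n _ ↦ by have := hd n; have := hw n; positivity)
    (by rw [← sum_div, div_self hD.ne'])
    (fun n _ ↦ Set.mem_Ici.2 (div_nonneg (hp n) (hd n).le))
  have hmean : ∑ n, (w n * d n / D) • (p n / d n) = (∑ n, w n * p n) / D := by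
    rw [sum_div]
    exact sum_congr rfl fun n _ ↦ by rw [smul_eq_mul]; field_simp [(hd n).ne', hD.ne']
  rw [hmean] at jensen
  calc (∑ n, w n * p n) * log ((∑ n, w n * p n) / D)
      = D * ((∑ n, w n * p n) / D * log ((∑ n, w n * p n) / D)) := by
        field_simp
    _ ≤ D * ∑ n, (w n * d n / D) • (p n / d n * log (p n / d n)) :=
        mul_le_mul_of_nonneg_left jensen hD.le
    _ = ∑ n, w n * (p n * log (p n / d n)) := by
        rw [mul_sum]
        exact sum_congr rfl fun n _ ↦ by rw [smul_eq_mul]; field_simp [(hd n).ne', hD.ne']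

theorem sum_sum_mul_of_sum_eq_one {T : ι → ι → ℝ} (hT1 : ∀ n, ∑ m, T m n = 1) (f : ι → ℝ) :
    ∑ m, ∑ n, T m n * f n = ∑ n, f n := by
  rw [sum_comm]
  simp only [← sum_mul, hT1, one_mul]

theorem sum_mul_log_div_le_of_stochastic {T : ι → ι → ℝ} {d p : ι → ℝ}
    (hT0 : ∀ m n, 0 ≤ T m n) (hT1 : ∀ n, ∑ m, T m n = 1)
    (hTd : ∀ m, ∑ n, T m n * d n = d m) (hd : ∀ n, 0 < d n) (hp : ∀ n, 0 ≤ p n) :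
    ∑ m, (∑ n, T m n * p n) * log ((∑ n, T m n * p n) / d m) ≤
      ∑ n, p n * log (p n / d n) := by
  calc ∑ m, (∑ n, T m n * p n) * log ((∑ n, T m n * p n) / d m)
      ≤ ∑ m, ∑ n, T m n * (p n * log (p n / d n)) := by
        refine sum_le_sum fun m _ ↦ ?_
        have := log_sum_inequality (hT0 m) hd hp (by rw [hTd m]; exact hd m)
        rwa [hTd m] at this
    _ = ∑ n, p n * log (p n / d n) := sum_sum_mul_of_sum_eq_one hT1 _

theorem sub_le_mul_log_div {p q : ℝ} (hp : 0 < p) (hq : 0 ≤ q) :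
    q - p ≤ q * log (q / p) := by
  have := mul_le_mul_of_nonneg_left (self_sub_one_le_mul_log (div_nonneg hq hp.le)) hp.le
  field_simp at this
  linarith

theorem sum_mul_log_div_nonneg {p q : ι → ℝ} (hp : ∀ n, 0 < p n) (hq : ∀ n, 0 ≤ q n)
    (hmass : ∑ n, q n = ∑ n, p n) : 0 ≤ ∑ n, q n * log (q n / p n) :=
  calc 0 = ∑ n, (q n - p n) := by rw [sum_sub_distrib, hmass, sub_self]
    _ ≤ _ := sum_le_sum fun n _ ↦ sub_le_mul_log_div (hp n) (hq n)

theorem mul_log_div_eq_add {p q d : ℝ} (hp : 0 < p) (hd : 0 < d) :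
    q * log (q / d) = q * log (q / p) + q * log (p / d) := by
  rcases eq_or_ne q 0 with rfl | hq
  · simp
  · rw [← mul_add, ← log_mul (div_ne_zero hq hp.ne') (div_ne_zero hp.ne' hd.ne'),
      div_mul_div_cancel₀ hp.ne']

theorem entropy_sub_le_of_log_div_eq_affine {p q d E : ι → ℝ} {β c : ℝ}
    (hp : ∀ n, 0 < p n) (hd : ∀ n, 0 < d n) (hq : ∀ n, 0 ≤ q n)
    (hmass : ∑ n, q n = ∑ n, p n) (hlog : ∀ n, log (p n / d n) = -β * E n + c) :
    (-(∑ n, q n * log (q n / d n))) - (-(∑ n, p n * log (p n / d n))) ≤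
      β * ((∑ n, q n * E n) - (∑ n, p n * E n)) := by
  have hcross (r : ι → ℝ) : ∑ n, r n * log (p n / d n) = -β * ∑ n, r n * E n + c * ∑ n, r n := by
    simp only [hlog, mul_add, sum_add_distrib, mul_sum]
    congr 1 <;> exact sum_congr rfl fun n _ ↦ by ring
  have hsplit : ∑ n, q n * log (q n / d n) =
      ∑ n, q n * log (q n / p n) + ∑ n, q n * log (p n / d n) := by
    rw [← sum_add_distrib]
    exact sum_congr rfl fun n _ ↦ mul_log_div_eq_add (hp n) (hd n)
  have hgibbs := sum_mul_log_div_nonneg hp hq hmass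
  rw [hsplit, hcross q, hcross p, hmass]
  linarith

end

theorem bistochastic_work_inequalities_general {N : Type*} [Fintype N]
    (E : N → ℝ) (d : N → ℕ) (hd : ∀ n, 0 < d n) (β : ℝ)
    (T : N → N → ℝ) (hT0 : ∀ m n, 0 ≤ T m n) (hT1 : ∀ n, ∑ m, T m n = 1)
    (hTbi : ∀ m, ∑ n, T m n * (d n : ℝ) = (d m : ℝ))
    (p q : N → ℝ)
    (hp : ∀ n, p n = (d n : ℝ) * Real.exp (-β * E n) /
      (∑ k, (d k : ℝ) * Real.exp (-β * E k)))
    (hq : ∀ m, q m = ∑ n, T m n * p n) :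
    0 ≤ (-(∑ n, q n * Real.log (q n / (d n : ℝ)))) -
        (-(∑ n, p n * Real.log (p n / (d n : ℝ)))) ∧
    (-(∑ n, q n * Real.log (q n / (d n : ℝ)))) -
        (-(∑ n, p n * Real.log (p n / (d n : ℝ)))) ≤
      β * ((∑ n, q n * E n) - (∑ n, p n * E n)) := by
  have hdpos (n : N) : (0 : ℝ) < d n := Nat.cast_pos.2 (hd n)
  set Z := ∑ k, (d k : ℝ) * exp (-β * E k)
  have hZ (n : N) : 0 < Z := sum_pos (fun k _ ↦ by have := hdpos k; positivity) ⟨n, mem_univ n⟩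
  have hppos (n : N) : 0 < p n := by rw [hp n]; have := hdpos n; have := hZ n; positivity
  have hqnonneg (m : N) : 0 ≤ q m := by
    rw [hq m]; exact sum_nonneg fun n _ ↦ mul_nonneg (hT0 m n) (hppos n).le
  have hmass : ∑ n, q n = ∑ n, p n := by
    simp only [hq]; exact sum_sum_mul_of_sum_eq_one hT1 p
  have hlog (n : N) : log (p n / d n) = -β * E n + -log Z := by
    rw [hp n, div_right_comm, mul_div_cancel_left₀ _ (hdpos n).ne',
      log_div (exp_pos _).ne' (hZ n).ne', log_exp, sub_eq_add_neg]
  refine ⟨?_, entropy_sub_le_of_log_div_eq_affine hppos hdpos hqnonneg hmass hlog⟩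
  have := sum_mul_log_div_le_of_stochastic hT0 hT1 hTbi hdpos fun n ↦ (hppos n).le
  simp only [← hq] at this
  linarith

/-- Bi-stochastic (work process) case: entropy does not decrease and
the average work is bounded below by the entropy increase over β. -/
theorem bistochastic_work_inequalities {N : Type*} [Fintype N] [Nonempty N]
    (E : N → ℝ) (d : N → ℕ) (hd : ∀ n, 0 < d n) (β : ℝ) (hβ : 0 ≤ β)
    (T : N → N → ℝ) (hT0 : ∀ m n, 0 ≤ T m n) (hT1 : ∀ n, ∑ m, T m n = 1)
    (hTbi : ∀ m, ∑ n, T m n * (d n : ℝ) = (d m : ℝ))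
    (p q : N → ℝ)
    (hp : ∀ n, p n = (d n : ℝ) * Real.exp (-β * E n) /
      (∑ k, (d k : ℝ) * Real.exp (-β * E k)))
    (hq : ∀ m, q m = ∑ n, T m n * p n) (hqpos : ∀ m, 0 < q m) :
    0 ≤ (-(∑ n, q n * Real.log (q n / (d n : ℝ)))) -
        (-(∑ n, p n * Real.log (p n / (d n : ℝ)))) ∧
    (-(∑ n, q n * Real.log (q n / (d n : ℝ)))) -
        (-(∑ n, p n * Real.log (p n / (d n : ℝ)))) ≤
      β * ((∑ n, q n * E n) - (∑ n, p n * E n)) :=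
  bistochastic_work_inequalities_general E d hd β T hT0 hT1 hTbi p q hp hq
end

section
/- Let N be a finite set, E : N → ℝ, d : N → ℕ positive, β₀ ∈ ℝ, p⁰ the Gibbs distribution at inverse temperature β₀, and T a left stochastic matrix with T p⁰ = p⁰. Then the quantity a := β₀ ∑_{n,m} T_{nm} p⁰_m E_m (E_m − E_n) satisfies a = (β₀/4) ∑_{n,m} (T_{nm} p⁰_m + T_{mn} p⁰_n)(E_m − E_n)², and in particular a ≥ 0 whenever β₀ ≥ 0. -/
/-!
Write `2 E_m (E_m - E_n) = (E_m - E_n)^2 + (E_m^2 - E_n^2)`. Against the flux `T_{nm} p⁰_m` the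
second part sums to zero: column-stochasticity turns its first half into `∑ p⁰ E^2`, and the
invariance `T p⁰ = p⁰` does the same for the second half. Symmetrizing the remaining sum of
squares under `n ↔ m` gives the identity, and its terms are nonnegative.
-/

open Finset Real

lemma gibbs_weight_nonneg {N : Type*} [Fintype N] (E : N → ℝ) (d : N → ℕ) (β : ℝ) (n : N) :
    0 ≤ (d n : ℝ) * exp (-β * E n) / ∑ k, (d k : ℝ) * exp (-β * E k) :=
  div_nonneg (by positivity) (sum_nonneg fun k _ => by positivity)

section Stationary

variable {N R : Type*} [Fintype N] [CommRing R] (T : N → N → R) (p : N → R)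

lemma sum_sum_stationary_flux_mul_sub_eq_zero (hT1 : ∀ n, ∑ m, T m n = 1)
    (hfix : ∀ m, ∑ n, T m n * p n = p m) (f : N → R) :
    ∑ n, ∑ m, T n m * p m * (f m - f n) = 0 := by
  have hsource : ∑ n, ∑ m, T n m * p m * f m = ∑ m, p m * f m := by
    rw [sum_comm]
    refine sum_congr rfl fun m _ => ?_
    rw [← sum_mul, ← sum_mul, hT1, one_mul]
  have htarget : ∑ n, ∑ m, T n m * p m * f n = ∑ n, p n * f n := by
    refine sum_congr rfl fun n _ => ?_
    rw [← sum_mul, hfix]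
  simp only [mul_sub, sum_sub_distrib, hsource, htarget, sub_self]

lemma two_mul_sum_sum_stationary_flux_mul_sub (hT1 : ∀ n, ∑ m, T m n = 1)
    (hfix : ∀ m, ∑ n, T m n * p n = p m) (E : N → R) :
    2 * ∑ n, ∑ m, T n m * p m * E m * (E m - E n) =
      ∑ n, ∑ m, T n m * p m * (E m - E n) ^ 2 := by
  have hbalance := sum_sum_stationary_flux_mul_sub_eq_zero T p hT1 hfix (fun k => E k ^ 2)
  rw [← sub_eq_zero, mul_sum, ← hbalance, ← sum_sub_distrib]
  refine sum_congr rfl fun n _ => ?_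
  rw [mul_sum, ← sum_sub_distrib]
  exact sum_congr rfl fun m _ => by ring

end Stationary

lemma sum_sum_add_swap_mul_sq_sub {N R : Type*} [Fintype N] [CommRing R] (A : N → N → R)
    (E : N → R) :
    ∑ n, ∑ m, (A n m + A m n) * (E m - E n) ^ 2 = 2 * ∑ n, ∑ m, A n m * (E m - E n) ^ 2 := by
  have hswap : ∑ n, ∑ m, A m n * (E m - E n) ^ 2 = ∑ n, ∑ m, A n m * (E m - E n) ^ 2 := by
    rw [sum_comm]
    exact sum_congr rfl fun n _ => sum_congr rfl fun m _ => by ring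
  simp only [add_mul, sum_add_distrib, hswap, two_mul]

theorem slope_symmetrization_nonneg_general {N : Type*} [Fintype N]
    (E : N → ℝ) (d : N → ℕ) (β₀ : ℝ)
    (T : N → N → ℝ) (hT0 : ∀ m n, 0 ≤ T m n) (hT1 : ∀ n, ∑ m, T m n = 1)
    (p0 : N → ℝ)
    (hp0 : ∀ n, p0 n = (d n : ℝ) * Real.exp (-β₀ * E n) /
      (∑ k, (d k : ℝ) * Real.exp (-β₀ * E k)))
    (hfix : ∀ m, ∑ n, T m n * p0 n = p0 m) :
    β₀ * ∑ n, ∑ m, T n m * p0 m * E m * (E m - E n) =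
      (β₀ / 4) * ∑ n, ∑ m, (T n m * p0 m + T m n * p0 n) * (E m - E n) ^ 2 ∧
    (0 ≤ β₀ → 0 ≤ β₀ * ∑ n, ∑ m, T n m * p0 m * E m * (E m - E n)) := by
  have hsymm := two_mul_sum_sum_stationary_flux_mul_sub T p0 hT1 hfix E
  have hsq_nonneg : 0 ≤ ∑ n, ∑ m, T n m * p0 m * (E m - E n) ^ 2 :=
    sum_nonneg fun n _ => sum_nonneg fun m _ =>
      mul_nonneg (mul_nonneg (hT0 n m) (hp0 m ▸ gibbs_weight_nonneg E d β₀ m)) (sq_nonneg _)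
  refine ⟨?_, fun hβ => mul_nonneg hβ (by linarith)⟩
  rw [sum_sum_add_swap_mul_sq_sub (fun n m => T n m * p0 m), ← hsymm]
  ring

/-- Symmetrization identity and nonnegativity of the slope `a`. -/
theorem slope_symmetrization_nonneg {N : Type*} [Fintype N] [Nonempty N]
    (E : N → ℝ) (d : N → ℕ) (hd : ∀ n, 0 < d n) (β₀ : ℝ)
    (T : N → N → ℝ) (hT0 : ∀ m n, 0 ≤ T m n) (hT1 : ∀ n, ∑ m, T m n = 1)
    (p0 : N → ℝ)
    (hp0 : ∀ n, p0 n = (d n : ℝ) * Real.exp (-β₀ * E n) /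
      (∑ k, (d k : ℝ) * Real.exp (-β₀ * E k)))
    (hfix : ∀ m, ∑ n, T m n * p0 n = p0 m) :
    β₀ * ∑ n, ∑ m, T n m * p0 m * E m * (E m - E n) =
      (β₀ / 4) * ∑ n, ∑ m, (T n m * p0 m + T m n * p0 n) * (E m - E n) ^ 2 ∧
    (0 ≤ β₀ → 0 ≤ β₀ * ∑ n, ∑ m, T n m * p0 m * E m * (E m - E n)) :=
  slope_symmetrization_nonneg_general E d β₀ T hT0 hT1 p0 hp0 hfix
end
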